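/- arXiv:1805.04852 — 5 statements merged into one kernel-verified Lean document; each statement's English description precedes it below -/
import Mathlib

section
/- For any set 𝕊 of 2-systems and any set ℍ of hypersequent rules such that for every Sys ∈ 𝕊 the corresponding hypersequent rule Hr_Sys belongs to ℍ: if a sequent Γ ⇒ Π is derivable in LJ + 𝕊, then Γ ⇒ Π is derivable in HLJ + ℍ. -/
/-! A top rule `Σ₁, Γ ⇒ Π … Σₙ, Γ ⇒ Π / Σ₀, Γ ⇒ Π` is captured by the formula
`φ = ⋀Σ₀ → ⋁ᵢ ⋀Σᵢ`: with `φ` in the antecedent, the rule becomes derivable by `→L`. So an LJ + 𝕊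
derivation in which the top rules `T` are enabled translates into HLJ + ℍ derivations of the
same sequents with the formulas of `T` added to the antecedent. For the bottom rule of a 2-system
with top rules `r₁, …, rₖ`, the rule `Hr_Sys` applied to the trivial premisses `Σ ⇒ ⋀Σ`
(followed by `∨R` and `→R`) gives `⇒ φ₁ | … | ⇒ φₖ`; cutting each `φᵢ` against the translated
i-th premiss `φᵢ, Γ ⇒ Π` and contracting externally yields `Γ ⇒ Π`. -/

/- Formulas of intuitionistic propositional logic -/
inductive Formula : Type
  | atom : ℕ → Formula
  | bot  : Formula
  | conj : Formula → Formula → Formula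
  | disj : Formula → Formula → Formula
  | impl : Formula → Formula → Formula

/-- A sequent Γ ⇒ Π. -/
abbrev Sequent : Type := Multiset Formula × Option Formula

/-- A hypersequent. -/
abbrev Hyper : Type := Multiset Sequent

/-- A (schematic) top rule of a 2-system: it infers Σ₀, Γ' ⇒ Π' from
Σ₁, Γ' ⇒ Π', …, Σₙ, Γ' ⇒ Π' for the fixed multisets Σ₀, Σ₁, …, Σₙ
(`concl` is Σ₀ and `prems` the list Σ₁, …, Σₙ), where Γ', Π' are arbitrary. -/
structure TopRule : Type where
  concl : Multiset Formula
  prems : List (Multiset Formula)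

/-- A two-level system of rules (2-system), given by its list of top rules
r₁, …, rₖ; its bottom rule infers Γ ⇒ Π from k premisses Γ ⇒ Π where the
derivation of the i-th premiss may use the top rule rᵢ. -/
structure TwoSystem : Type where
  tops : List TopRule

/-- A hypersequent rule: its conclusion is
G | θ₁¹,…,θ₁ⁿ¹, Γ₁ ⇒ Π₁ | … | θₖ¹,…,θₖⁿᵏ, Γₖ ⇒ Πₖ and its premisses are,
for each component i, the hypersequents G | Σ, Γᵢ ⇒ Πᵢ for Σ among the
premiss-multisets of the i-th component. -/
structure HypRule : Type where
  comps : List TopRule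

/-- The hypersequent rule `Hr_Sys` corresponding to a 2-system `Sys`. -/
def hrOfSys (sys : TwoSystem) : HypRule := ⟨sys.tops⟩

/-- Derivability in LJ + 𝕊, where the auxiliary parameter `T` records the top
rules currently enabled (by bottom rules applied below).  `⊢_{LJ+𝕊} s` is
`SDer S ∅ s`.  The constructor `bot` is the bottom rule of a 2-system in `S`:
it has one premiss Γ ⇒ Π for each top rule rᵢ of the 2-system, and in the
derivation of the i-th premiss the top rule rᵢ may (also) be applied;
the constructor `top` applies an enabled top rule. -/
inductive SDer (S : Set TwoSystem) : Set TopRule → Sequent → Prop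
  | ax (T) (φ : Formula) : SDer S T ({φ}, some φ)
  | botL (T) (Δ : Option Formula) : SDer S T ({Formula.bot}, Δ)
  | disjL {T} {Γ : Multiset Formula} {Δ : Option Formula} (φ ψ : Formula) :
      SDer S T (φ ::ₘ Γ, Δ) → SDer S T (ψ ::ₘ Γ, Δ) →
      SDer S T (Formula.disj φ ψ ::ₘ Γ, Δ)
  | disjR1 {T} {Γ : Multiset Formula} (φ ψ : Formula) :
      SDer S T (Γ, some φ) → SDer S T (Γ, some (Formula.disj φ ψ))
  | disjR2 {T} {Γ : Multiset Formula} (φ ψ : Formula) :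
      SDer S T (Γ, some ψ) → SDer S T (Γ, some (Formula.disj φ ψ))
  | conjL {T} {Γ : Multiset Formula} {Δ : Option Formula} (φ ψ : Formula) :
      SDer S T (φ ::ₘ ψ ::ₘ Γ, Δ) → SDer S T (Formula.conj φ ψ ::ₘ Γ, Δ)
  | conjR {T} {Γ : Multiset Formula} (φ ψ : Formula) :
      SDer S T (Γ, some φ) → SDer S T (Γ, some ψ) →
      SDer S T (Γ, some (Formula.conj φ ψ))
  | implL {T} {Γ : Multiset Formula} {Δ : Option Formula} (φ ψ : Formula) :
      SDer S T (Γ, some φ) → SDer S T (ψ ::ₘ Γ, Δ) →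
      SDer S T (Formula.impl φ ψ ::ₘ Γ, Δ)
  | implR {T} {Γ : Multiset Formula} (φ ψ : Formula) :
      SDer S T (φ ::ₘ Γ, some ψ) → SDer S T (Γ, some (Formula.impl φ ψ))
  | iw {T} {Γ : Multiset Formula} {Δ : Option Formula} (φ : Formula) :
      SDer S T (Γ, Δ) → SDer S T (φ ::ₘ Γ, Δ)
  | ic {T} {Γ : Multiset Formula} {Δ : Option Formula} (φ : Formula) :
      SDer S T (φ ::ₘ φ ::ₘ Γ, Δ) → SDer S T (φ ::ₘ Γ, Δ)
  | cut {T} {Γ Γ' : Multiset Formula} {Δ : Option Formula} (φ : Formula) :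
      SDer S T (Γ, some φ) → SDer S T (φ ::ₘ Γ', Δ) → SDer S T (Γ + Γ', Δ)
  | top {T} (t : TopRule) (ht : t ∈ T) (Γ' : Multiset Formula) (Δ' : Option Formula) :
      (∀ p ∈ t.prems, SDer S T (p + Γ', Δ')) → SDer S T (t.concl + Γ', Δ')
  | bot {T} (sys : TwoSystem) (hs : sys ∈ S) (Γ : Multiset Formula) (Δ : Option Formula) :
      (∀ t ∈ sys.tops, SDer S (insert t T) (Γ, Δ)) → SDer S T (Γ, Δ)

/-- Derivability in HLJ + ℍ for a set ℍ of hypersequent rules: the rules of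
HLJ (each LJ rule with a hypersequent context G, plus external weakening and
external contraction) together with the rules of ℍ; an instance of a rule of
ℍ is given by the shared context G and a context Γᵢ ⇒ Πᵢ for each of its
components. -/
inductive HDer (Hs : Set HypRule) : Hyper → Prop
  | ax (φ : Formula) : HDer Hs {(({φ} : Multiset Formula), some φ)}
  | botL (Δ : Option Formula) : HDer Hs {(({Formula.bot} : Multiset Formula), Δ)}
  | disjL {G : Hyper} {Γ : Multiset Formula} {Δ : Option Formula} (φ ψ : Formula) :
      HDer Hs ((φ ::ₘ Γ, Δ) ::ₘ G) → HDer Hs ((ψ ::ₘ Γ, Δ) ::ₘ G) →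
      HDer Hs ((Formula.disj φ ψ ::ₘ Γ, Δ) ::ₘ G)
  | disjR1 {G : Hyper} {Γ : Multiset Formula} (φ ψ : Formula) :
      HDer Hs ((Γ, some φ) ::ₘ G) → HDer Hs ((Γ, some (Formula.disj φ ψ)) ::ₘ G)
  | disjR2 {G : Hyper} {Γ : Multiset Formula} (φ ψ : Formula) :
      HDer Hs ((Γ, some ψ) ::ₘ G) → HDer Hs ((Γ, some (Formula.disj φ ψ)) ::ₘ G)
  | conjL {G : Hyper} {Γ : Multiset Formula} {Δ : Option Formula} (φ ψ : Formula) :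
      HDer Hs ((φ ::ₘ ψ ::ₘ Γ, Δ) ::ₘ G) → HDer Hs ((Formula.conj φ ψ ::ₘ Γ, Δ) ::ₘ G)
  | conjR {G : Hyper} {Γ : Multiset Formula} (φ ψ : Formula) :
      HDer Hs ((Γ, some φ) ::ₘ G) → HDer Hs ((Γ, some ψ) ::ₘ G) →
      HDer Hs ((Γ, some (Formula.conj φ ψ)) ::ₘ G)
  | implL {G : Hyper} {Γ : Multiset Formula} {Δ : Option Formula} (φ ψ : Formula) :
      HDer Hs ((Γ, some φ) ::ₘ G) → HDer Hs ((ψ ::ₘ Γ, Δ) ::ₘ G) →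
      HDer Hs ((Formula.impl φ ψ ::ₘ Γ, Δ) ::ₘ G)
  | implR {G : Hyper} {Γ : Multiset Formula} (φ ψ : Formula) :
      HDer Hs ((φ ::ₘ Γ, some ψ) ::ₘ G) → HDer Hs ((Γ, some (Formula.impl φ ψ)) ::ₘ G)
  | iw {G : Hyper} {Γ : Multiset Formula} {Δ : Option Formula} (φ : Formula) :
      HDer Hs ((Γ, Δ) ::ₘ G) → HDer Hs ((φ ::ₘ Γ, Δ) ::ₘ G)
  | ic {G : Hyper} {Γ : Multiset Formula} {Δ : Option Formula} (φ : Formula) :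
      HDer Hs ((φ ::ₘ φ ::ₘ Γ, Δ) ::ₘ G) → HDer Hs ((φ ::ₘ Γ, Δ) ::ₘ G)
  | cut {G : Hyper} {Γ Γ' : Multiset Formula} {Δ : Option Formula} (φ : Formula) :
      HDer Hs ((Γ, some φ) ::ₘ G) → HDer Hs ((φ ::ₘ Γ', Δ) ::ₘ G) →
      HDer Hs ((Γ + Γ', Δ) ::ₘ G)
  | ew {G : Hyper} (s : Sequent) : HDer Hs G → HDer Hs (s ::ₘ G)
  | ec {G : Hyper} (s : Sequent) : HDer Hs (s ::ₘ s ::ₘ G) → HDer Hs (s ::ₘ G)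
  | ext (hr : HypRule) (hmem : hr ∈ Hs) (G : Hyper)
      (ctx : List (Multiset Formula × Option Formula))
      (hlen : ctx.length = hr.comps.length)
      (hprem : ∀ pr ∈ hr.comps.zip ctx, ∀ p ∈ pr.1.prems,
        HDer Hs ((p + pr.2.1, pr.2.2) ::ₘ G)) :
      HDer Hs ((((hr.comps.zip ctx).map fun pr => (pr.1.concl + pr.2.1, pr.2.2) :
        List Sequent) : Multiset Sequent) + G)

namespace Formula

def top : Formula := impl bot bot

def listConj (L : List Formula) : Formula := L.foldr conj top

def listDisj (L : List Formula) : Formula := L.foldr disj bot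

noncomputable def multisetConj (m : Multiset Formula) : Formula := listConj m.toList

end Formula

open Formula

noncomputable def TopRule.formula (t : TopRule) : Formula :=
  impl (multisetConj t.concl) (listDisj (t.prems.map multisetConj))

namespace HDer

variable {Hs : Set HypRule}

theorem ew_add (G : Hyper) {H : Hyper} (h : HDer Hs H) : HDer Hs (G + H) := by
  induction G using Multiset.induction with
  | empty => simpa using h
  | cons s G ih => simpa only [Multiset.cons_add] using ew s ih

theorem of_singleton {s : Sequent} (G : Hyper) (h : HDer Hs {s}) : HDer Hs (s ::ₘ G) := by
  simpa only [add_comm G, Multiset.singleton_add] using ew_add G h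

theorem iw_add {X : Multiset Formula} {Δ : Option Formula} {G : Hyper} (Y : Multiset Formula)
    (h : HDer Hs ((X, Δ) ::ₘ G)) : HDer Hs ((Y + X, Δ) ::ₘ G) := by
  induction Y using Multiset.induction with
  | empty => simpa using h
  | cons φ Y ih => simpa only [Multiset.cons_add] using iw φ ih

theorem iw_of_le {X Y : Multiset Formula} {Δ : Option Formula} {G : Hyper} (hXY : X ≤ Y)
    (h : HDer Hs ((X, Δ) ::ₘ G)) : HDer Hs ((Y, Δ) ::ₘ G) := by
  obtain ⟨Z, rfl⟩ := Multiset.le_iff_exists_add.1 hXY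
  simpa only [add_comm Z] using iw_add Z h

theorem ic_add {X : Multiset Formula} {Δ : Option Formula} {G : Hyper} (Y : Multiset Formula)
    (h : HDer Hs ((Y + Y + X, Δ) ::ₘ G)) : HDer Hs ((Y + X, Δ) ::ₘ G) := by
  induction Y using Multiset.induction generalizing X with
  | empty => simpa using h
  | cons φ Y ih =>
    have h₁ : HDer Hs ((φ ::ₘ φ ::ₘ (Y + Y + X), Δ) ::ₘ G) := by
      simpa only [Multiset.cons_add, Multiset.add_cons] using h
    have h₂ : HDer Hs ((Y + Y + φ ::ₘ X, Δ) ::ₘ G) := by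
      simpa only [Multiset.add_cons] using ic φ h₁
    simpa only [Multiset.cons_add, Multiset.add_cons] using ih h₂

theorem ic_of_mem {X : Multiset Formula} {Δ : Option Formula} {G : Hyper} {φ : Formula}
    (hφ : φ ∈ X) (h : HDer Hs ((φ ::ₘ X, Δ) ::ₘ G)) : HDer Hs ((X, Δ) ::ₘ G) := by
  obtain ⟨X, rfl⟩ := Multiset.exists_cons_of_mem hφ
  exact ic φ h

theorem ax_of_mem {X : Multiset Formula} {G : Hyper} {φ : Formula} (hφ : φ ∈ X) :
    HDer Hs ((X, some φ) ::ₘ G) :=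
  iw_of_le (Multiset.singleton_le.2 hφ) (of_singleton G (ax φ))

theorem botL_of_mem {X : Multiset Formula} {Δ : Option Formula} {G : Hyper} (hX : bot ∈ X) :
    HDer Hs ((X, Δ) ::ₘ G) :=
  iw_of_le (Multiset.singleton_le.2 hX) (of_singleton G (botL Δ))

theorem listConj_right {X : Multiset Formula} {G : Hyper} :
    ∀ {L : List Formula}, (L : Multiset Formula) ≤ X → HDer Hs ((X, some (listConj L)) ::ₘ G)
  | [], _ => implR _ _ (botL_of_mem (Multiset.mem_cons_self _ _))
  | φ :: L, hL => conjR _ _ (ax_of_mem (Multiset.mem_of_le hL (by simp)))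
      (listConj_right ((Multiset.le_cons_self _ φ).trans hL))

theorem listConj_left {Δ : Option Formula} {G : Hyper} :
    ∀ {L : List Formula} {X : Multiset Formula},
      HDer Hs (((L : Multiset Formula) + X, Δ) ::ₘ G) → HDer Hs ((listConj L ::ₘ X, Δ) ::ₘ G)
  | [], _, h => iw _ (by simpa using h)
  | φ :: L, X, h => conjL _ _ (by
      rw [Multiset.cons_swap]
      exact listConj_left (by simpa only [← Multiset.cons_coe, Multiset.cons_add,
        Multiset.add_cons] using h))

theorem listDisj_right_of_mem {X : Multiset Formula} {G : Hyper} {φ : Formula} :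
    ∀ {L : List Formula}, φ ∈ L → HDer Hs ((X, some φ) ::ₘ G) →
      HDer Hs ((X, some (listDisj L)) ::ₘ G)
  | ψ :: L, hφ, h => by
    rcases List.mem_cons.1 hφ with rfl | hφ
    · exact disjR1 _ _ h
    · exact disjR2 _ _ (listDisj_right_of_mem hφ h)

theorem listDisj_left {X : Multiset Formula} {Δ : Option Formula} {G : Hyper} :
    ∀ {L : List Formula}, (∀ φ ∈ L, HDer Hs ((φ ::ₘ X, Δ) ::ₘ G)) →
      HDer Hs ((listDisj L ::ₘ X, Δ) ::ₘ G)
  | [], _ => botL_of_mem (Multiset.mem_cons_self _ _)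
  | φ :: L, h => disjL _ _ (h φ (by simp)) (listDisj_left fun ψ hψ => h ψ (by simp [hψ]))

theorem multisetConj_right {X Y : Multiset Formula} {G : Hyper} (hXY : X ≤ Y) :
    HDer Hs ((Y, some (multisetConj X)) ::ₘ G) :=
  listConj_right (by rwa [Multiset.coe_toList])

theorem multisetConj_left {X Y : Multiset Formula} {Δ : Option Formula} {G : Hyper}
    (h : HDer Hs ((X + Y, Δ) ::ₘ G)) : HDer Hs ((multisetConj X ::ₘ Y, Δ) ::ₘ G) :=
  listConj_left (by rwa [Multiset.coe_toList])

theorem topRule_formula_left {t : TopRule} {X : Multiset Formula} {Δ : Option Formula}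
    {G : Hyper} (hconcl : t.concl ≤ X) (hprems : ∀ p ∈ t.prems, HDer Hs ((p + X, Δ) ::ₘ G)) :
    HDer Hs ((t.formula ::ₘ X, Δ) ::ₘ G) :=
  implL _ _ (multisetConj_right hconcl) <| listDisj_left fun _ hφ => by
    obtain ⟨p, hp, rfl⟩ := List.mem_map.1 hφ
    exact multisetConj_left (hprems p hp)

theorem topRule_formula_right {t : TopRule} {X : Multiset Formula} {G : Hyper}
    (h : HDer Hs ((t.concl + X, some (listDisj (t.prems.map multisetConj))) ::ₘ G)) :
    HDer Hs ((X, some t.formula) ::ₘ G) :=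
  implR _ _ (multisetConj_left h)

theorem map_components {α : Type*} (f g : α → Sequent) :
    ∀ {L : List α} {G : Hyper}, (∀ a ∈ L, ∀ G', HDer Hs (f a ::ₘ G') → HDer Hs (g a ::ₘ G')) →
      HDer Hs (↑(L.map f) + G) → HDer Hs (↑(L.map g) + G)
  | [], _, _, h => h
  | a :: L, G, hfg, h => by
    have h₁ : HDer Hs (g a ::ₘ (↑(L.map f) + G)) := hfg a (by simp) _ <| by
      simpa only [List.map_cons, ← Multiset.cons_coe, Multiset.cons_add] using h
    have h₂ := map_components f g (L := L) (fun b hb => hfg b (by simp [hb]))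
      (by rwa [← Multiset.add_cons] at h₁)
    simpa only [List.map_cons, ← Multiset.cons_coe, Multiset.cons_add, Multiset.add_cons] using h₂

theorem ext_map {hr : HypRule} (hhr : hr ∈ Hs) (G : Hyper) (ctx : TopRule → Sequent)
    (hprems : ∀ t ∈ hr.comps, ∀ p ∈ t.prems, HDer Hs ((p + (ctx t).1, (ctx t).2) ::ₘ G)) :
    HDer Hs (↑(hr.comps.map fun t => (t.concl + (ctx t).1, (ctx t).2)) + G) := by
  have h := ext hr hhr G (hr.comps.map ctx) (List.length_map _) (by
    rw [← List.map_prod_left_eq_zip]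
    intro pr hpr
    obtain ⟨t, ht, rfl⟩ := List.mem_map.1 hpr
    exact hprems t ht)
  rwa [← List.map_prod_left_eq_zip, List.map_map] at h

theorem topRule_formulas {hr : HypRule} (hhr : hr ∈ Hs) (G : Hyper) :
    HDer Hs (↑(hr.comps.map fun t => ((0 : Multiset Formula), some t.formula)) + G) := by
  refine map_components _ _ (fun t _ G' h => topRule_formula_right h) <|
    ext_map hhr G (fun t => (0, some (listDisj (t.prems.map multisetConj)))) ?_
  intro t _ p hp
  exact listDisj_right_of_mem (List.mem_map_of_mem hp) (multisetConj_right (by simp))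

theorem cut_components {s : Multiset Formula} {Δ : Option Formula} :
    ∀ {L : List Formula} {G : Hyper}, (∀ φ ∈ L, HDer Hs {(φ ::ₘ s, Δ)}) →
      HDer Hs (↑(L.map fun φ => ((0 : Multiset Formula), some φ)) + G) → HDer Hs ((s, Δ) ::ₘ G)
  | [], G, _, h => ew _ (by simpa using h)
  | φ :: L, G, hcut, h => by
    have h₁ := cut φ (by simpa only [List.map_cons, ← Multiset.cons_coe, Multiset.cons_add] using h)
      (of_singleton _ (hcut φ (by simp)))
    rw [zero_add, ← Multiset.add_cons] at h₁
    exact ec _ (cut_components (fun ψ hψ => hcut ψ (by simp [hψ])) h₁)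

end HDer

theorem SDer.toHDer {S : Set TwoSystem} {Hs : Set HypRule} (hSH : ∀ sys ∈ S, hrOfSys sys ∈ Hs)
    {T : Set TopRule} {s : Sequent} (h : SDer S T s) :
    ∀ Φ : Multiset Formula, (∀ t ∈ T, t.formula ∈ Φ) → HDer Hs {(s.1 + Φ, s.2)} := by
  induction h with
  | ax _ φ => exact fun Φ _ => HDer.ax_of_mem (by simp)
  | botL _ Δ => exact fun Φ _ => HDer.botL_of_mem (by simp)
  | disjL φ ψ _ _ ih₁ ih₂ =>
    simp only [Multiset.cons_add] at ih₁ ih₂ ⊢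
    exact fun Φ hΦ => HDer.disjL φ ψ (ih₁ Φ hΦ) (ih₂ Φ hΦ)
  | disjR1 φ ψ _ ih => exact fun Φ hΦ => HDer.disjR1 φ ψ (ih Φ hΦ)
  | disjR2 φ ψ _ ih => exact fun Φ hΦ => HDer.disjR2 φ ψ (ih Φ hΦ)
  | conjL φ ψ _ ih =>
    simp only [Multiset.cons_add] at ih ⊢
    exact fun Φ hΦ => HDer.conjL φ ψ (ih Φ hΦ)
  | conjR φ ψ _ _ ih₁ ih₂ => exact fun Φ hΦ => HDer.conjR φ ψ (ih₁ Φ hΦ) (ih₂ Φ hΦ)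
  | implL φ ψ _ _ ih₁ ih₂ =>
    simp only [Multiset.cons_add] at ih₂ ⊢
    exact fun Φ hΦ => HDer.implL φ ψ (ih₁ Φ hΦ) (ih₂ Φ hΦ)
  | implR φ ψ _ ih =>
    simp only [Multiset.cons_add] at ih
    exact fun Φ hΦ => HDer.implR φ ψ (ih Φ hΦ)
  | iw φ _ ih =>
    simp only [Multiset.cons_add]
    exact fun Φ hΦ => HDer.iw φ (ih Φ hΦ)
  | ic φ _ ih =>
    simp only [Multiset.cons_add] at ih ⊢
    exact fun Φ hΦ => HDer.ic φ (ih Φ hΦ)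
  | @cut _ Γ Γ' Δ φ _ _ ih₁ ih₂ =>
    intro Φ hΦ
    have h := HDer.cut φ (ih₁ Φ hΦ) (by rw [← Multiset.cons_add]; exact ih₂ Φ hΦ)
    rw [show Γ + Φ + (Γ' + Φ) = Φ + Φ + (Γ + Γ') by abel] at h
    show HDer Hs {(Γ + Γ' + Φ, Δ)}
    rw [add_comm]
    exact HDer.ic_add Φ h
  | @top _ t ht Γ' Δ' _ ih =>
    intro Φ hΦ
    refine HDer.ic_of_mem (Multiset.mem_add.2 (Or.inr (hΦ t ht))) <|
      HDer.topRule_formula_left (by simp [add_assoc]) fun p hp => ?_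
    refine HDer.iw_of_le ?_ (ih p hp Φ hΦ)
    simp [add_assoc]
  | bot sys hsys Γ Δ _ ih =>
    intro Φ hΦ
    refine HDer.cut_components (L := sys.tops.map TopRule.formula) (G := 0) ?_ ?_
    · simp only [List.forall_mem_map]
      intro t ht
      have h := ih t ht (t.formula ::ₘ Φ) <| Set.forall_mem_insert.2
        ⟨Multiset.mem_cons_self _ _, fun u hu => Multiset.mem_cons_of_mem (hΦ u hu)⟩
      rwa [Multiset.add_cons] at h
    · rw [List.map_map]
      exact HDer.topRule_formulas (hSH sys hsys) 0

/-- Theorem (2-systems to hypersequents): for any set 𝕊 of 2-systems and set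
ℍ of hypersequent rules such that `Hr_Sys ∈ ℍ` whenever `Sys ∈ 𝕊`, if the
sequent Γ ⇒ Π is derivable in LJ + 𝕊, then it is derivable in HLJ + ℍ. -/
theorem sys_to_hyp (S : Set TwoSystem) (Hs : Set HypRule)
    (hSH : ∀ sys ∈ S, hrOfSys sys ∈ Hs)
    (Γ : Multiset Formula) (Δ : Option Formula)
    (h : SDer S ∅ (Γ, Δ)) : HDer Hs {(Γ, Δ)} := by
  simpa using SDer.toHDer hSH h 0 (by simp)
end

section
/- For any set ℍ of hypersequent rules and any set 𝕊 of 2-systems such that for every Hr ∈ ℍ the corresponding 2-system Sys_Hr belongs to 𝕊: if a sequent Γ ⇒ Π is derivable in HLJ + ℍ, then Γ ⇒ Π is derivable in LJ + 𝕊. -/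
/-- The 2-system `Sys_Hr` corresponding to a hypersequent rule `Hr`: the
premisses linked to the i-th active component of the conclusion of `Hr`
become the premisses of the i-th top rule. -/
def sysOfHr (hr : HypRule) : TwoSystem := ⟨hr.comps⟩

/-!
A hypersequent `H` is read in continuation-passing style (`HyperDer S H`): it holds if, for
every target sequent and every set `T` of enabled top rules, the target is derivable from `T`
as soon as each component of `H` would yield the target once derived (from any larger set of
enabled top rules). Under this reading EW and EC are trivial, the LJ rules act on one
component, and an application of `Hr` becomes the bottom rule of `Sys_Hr`: its premiss for the
i-th component enables the top rule rᵢ, which turns derivations of the premisses linked to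
that component into a derivation of the component itself.
-/

section

variable {S : Set TwoSystem}

theorem SDer.mono {T T' : Set TopRule} {s : Sequent} (h : SDer S T s) (hT : T ⊆ T') :
    SDer S T' s := by
  induction h generalizing T' with
  | ax T φ => exact .ax _ φ
  | botL T Δ => exact .botL _ Δ
  | disjL φ ψ _ _ ih₁ ih₂ => exact .disjL φ ψ (ih₁ hT) (ih₂ hT)
  | disjR1 φ ψ _ ih => exact .disjR1 φ ψ (ih hT)
  | disjR2 φ ψ _ ih => exact .disjR2 φ ψ (ih hT)
  | conjL φ ψ _ ih => exact .conjL φ ψ (ih hT)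
  | conjR φ ψ _ _ ih₁ ih₂ => exact .conjR φ ψ (ih₁ hT) (ih₂ hT)
  | implL φ ψ _ _ ih₁ ih₂ => exact .implL φ ψ (ih₁ hT) (ih₂ hT)
  | implR φ ψ _ ih => exact .implR φ ψ (ih hT)
  | iw φ _ ih => exact .iw φ (ih hT)
  | ic φ _ ih => exact .ic φ (ih hT)
  | cut φ _ _ ih₁ ih₂ => exact .cut φ (ih₁ hT) (ih₂ hT)
  | top t ht Γ' Δ' _ ih => exact .top t (hT ht) Γ' Δ' fun p hp => ih p hp hT
  | bot sys hs Γ Δ _ ih =>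
    exact .bot sys hs Γ Δ fun t ht => ih t ht (Set.insert_subset_insert hT)

def ImpliesAbove (S : Set TwoSystem) (T : Set TopRule) (s tgt : Sequent) : Prop :=
  ∀ T', T ⊆ T' → SDer S T' s → SDer S T' tgt

theorem ImpliesAbove.mono {T T' : Set TopRule} {s tgt : Sequent} (h : ImpliesAbove S T s tgt)
    (hT : T ⊆ T') : ImpliesAbove S T' s tgt :=
  fun T'' hT' => h T'' (hT.trans hT')

def HyperDer (S : Set TwoSystem) (H : Hyper) : Prop :=
  ∀ tgt T, (∀ s ∈ H, ImpliesAbove S T s tgt) → SDer S T tgt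

namespace HyperDer

theorem sder_of_singleton {s : Sequent} (h : HyperDer S {s}) (T : Set TopRule) : SDer S T s :=
  h s T fun _ hs _ _ d => Multiset.mem_singleton.mp hs ▸ d

theorem of_subset {G G' : Hyper} (h : HyperDer S G) (hG : G ⊆ G') : HyperDer S G' :=
  fun tgt T F => h tgt T fun s hs => F s (hG hs)

theorem sder_of_premisses {G : Hyper} {tgt : Sequent} (ps : List Sequent)
    (hps : ∀ p ∈ ps, HyperDer S (p ::ₘ G)) {T : Set TopRule}
    (hG : ∀ s ∈ G, ImpliesAbove S T s tgt)
    (hrule : ∀ T', T ⊆ T' → (∀ p ∈ ps, SDer S T' p) → SDer S T' tgt) :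
    SDer S T tgt := by
  induction ps generalizing T with
  | nil => exact hrule T subset_rfl nofun
  | cons p ps ih =>
    refine hps p List.mem_cons_self tgt T fun s hs => ?_
    obtain rfl | hs := Multiset.mem_cons.mp hs
    · intro T₁ hT₁ hp
      refine ih (fun q hq => hps q (List.mem_cons_of_mem _ hq))
        (fun s hs => (hG s hs).mono hT₁) fun T₂ hT₂ hqs => hrule T₂ (hT₁.trans hT₂) ?_
      simpa [hp.mono hT₂] using hqs
    · exact hG s hs

theorem of_rule {G : Hyper} {c : Sequent} (ps : List Sequent)
    (hps : ∀ p ∈ ps, HyperDer S (p ::ₘ G))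
    (rule : ∀ T, (∀ p ∈ ps, SDer S T p) → SDer S T c) : HyperDer S (c ::ₘ G) :=
  fun _ _ F => sder_of_premisses ps hps (fun s hs => F s (Multiset.mem_cons_of_mem hs))
    fun T' hT' hall => F c (Multiset.mem_cons_self c G) T' hT' (rule T' hall)

theorem of_rule₁ {G : Hyper} {c c' : Sequent} (h : HyperDer S (c' ::ₘ G))
    (rule : ∀ T, SDer S T c' → SDer S T c) : HyperDer S (c ::ₘ G) :=
  of_rule [c'] (by simpa using h) fun T hall => rule T (hall c' (by simp))

theorem of_rule₂ {G : Hyper} {c c₁ c₂ : Sequent} (h₁ : HyperDer S (c₁ ::ₘ G))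
    (h₂ : HyperDer S (c₂ ::ₘ G)) (rule : ∀ T, SDer S T c₁ → SDer S T c₂ → SDer S T c) :
    HyperDer S (c ::ₘ G) :=
  of_rule [c₁, c₂] (by simp [h₁, h₂]) fun T hall => rule T (hall c₁ (by simp)) (hall c₂ (by simp))

theorem of_hypRule {hr : HypRule} (hS : sysOfHr hr ∈ S) (G : Hyper)
    (ctx : List (Multiset Formula × Option Formula)) (hlen : ctx.length = hr.comps.length)
    (hprem : ∀ pr ∈ hr.comps.zip ctx, ∀ p ∈ pr.1.prems,
      HyperDer S ((p + pr.2.1, pr.2.2) ::ₘ G)) :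
    HyperDer S ((((hr.comps.zip ctx).map fun pr => (pr.1.concl + pr.2.1, pr.2.2) :
      List Sequent) : Multiset Sequent) + G) := by
  intro tgt T F
  refine .bot (sysOfHr hr) hS tgt.1 tgt.2 fun t ht => ?_
  obtain ⟨⟨t, c⟩, htc, rfl⟩ : ∃ pr ∈ hr.comps.zip ctx, pr.1 = t := by
    rw [← List.mem_map, List.map_fst_zip hlen.ge]
    exact ht
  have hcomp : ImpliesAbove S T (t.concl + c.1, c.2) tgt :=
    F _ (Multiset.mem_add.mpr (.inl (Multiset.mem_coe.mpr (List.mem_map_of_mem htc))))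
  refine sder_of_premisses (t.prems.map fun p => (p + c.1, c.2))
    (by simpa using hprem _ htc)
    (fun s hs => (F s (Multiset.mem_add.mpr (.inr hs))).mono (Set.subset_insert t T))
    fun T' hT' hall => hcomp T' ((Set.subset_insert t T).trans hT') ?_
  exact .top t (hT' (Set.mem_insert t T)) c.1 c.2 fun p hp =>
    hall _ (List.mem_map_of_mem hp)

end HyperDer

theorem HDer.hyperDer {Hs : Set HypRule} (hHS : ∀ hr ∈ Hs, sysOfHr hr ∈ S) {H : Hyper}
    (h : HDer Hs H) : HyperDer S H := by
  induction h with
  | ax φ => exact .of_rule [] nofun fun T _ => .ax T φ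
  | botL Δ => exact .of_rule [] nofun fun T _ => .botL T Δ
  | disjL φ ψ _ _ ih₁ ih₂ => exact ih₁.of_rule₂ ih₂ fun _ => .disjL φ ψ
  | disjR1 φ ψ _ ih => exact ih.of_rule₁ fun _ => .disjR1 φ ψ
  | disjR2 φ ψ _ ih => exact ih.of_rule₁ fun _ => .disjR2 φ ψ
  | conjL φ ψ _ ih => exact ih.of_rule₁ fun _ => .conjL φ ψ
  | conjR φ ψ _ _ ih₁ ih₂ => exact ih₁.of_rule₂ ih₂ fun _ => .conjR φ ψ
  | implL φ ψ _ _ ih₁ ih₂ => exact ih₁.of_rule₂ ih₂ fun _ => .implL φ ψ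
  | implR φ ψ _ ih => exact ih.of_rule₁ fun _ => .implR φ ψ
  | iw φ _ ih => exact ih.of_rule₁ fun _ => .iw φ
  | ic φ _ ih => exact ih.of_rule₁ fun _ => .ic φ
  | cut φ _ _ ih₁ ih₂ => exact ih₁.of_rule₂ ih₂ fun _ => .cut φ
  | ew s _ ih => exact ih.of_subset (Multiset.subset_cons _ s)
  | ec s _ ih => exact ih.of_subset (by simp [Multiset.cons_subset])
  | ext hr hmem G ctx hlen _ ih => exact .of_hypRule (hHS hr hmem) G ctx hlen ih

end

/-- Theorem (hypersequents to 2-systems): for any set ℍ of hypersequent rules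
and set 𝕊 of 2-systems such that `Sys_Hr ∈ 𝕊` whenever `Hr ∈ ℍ`, if the
sequent Γ ⇒ Π is derivable in HLJ + ℍ, then it is derivable in LJ + 𝕊. -/
theorem hyp_to_sys (Hs : Set HypRule) (S : Set TwoSystem)
    (hHS : ∀ hr ∈ Hs, sysOfHr hr ∈ S)
    (Γ : Multiset Formula) (Δ : Option Formula)
    (h : HDer Hs {(Γ, Δ)}) : SDer S ∅ (Γ, Δ) :=
  (h.hyperDer hHS).sder_of_singleton ∅
end

section
/- Any derivation in LJ extended with 2-systems can be transformed into a derivation of the same end-sequent, in the same calculus, in which two applications of a top rule belonging to the same 2-system instance never occur on the same path (branch) of the derivation tree. -/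
/-- The rules of LJ, as a relation between the list of premisses and the
conclusion. -/
inductive LJRule : List Sequent → Sequent → Prop
  | ax (φ : Formula) : LJRule [] ({φ}, some φ)
  | botL (Δ : Option Formula) : LJRule [] ({Formula.bot}, Δ)
  | disjL {Γ : Multiset Formula} {Δ : Option Formula} (φ ψ : Formula) :
      LJRule [(φ ::ₘ Γ, Δ), (ψ ::ₘ Γ, Δ)] (Formula.disj φ ψ ::ₘ Γ, Δ)
  | disjR1 {Γ : Multiset Formula} (φ ψ : Formula) :
      LJRule [(Γ, some φ)] (Γ, some (Formula.disj φ ψ))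
  | disjR2 {Γ : Multiset Formula} (φ ψ : Formula) :
      LJRule [(Γ, some ψ)] (Γ, some (Formula.disj φ ψ))
  | conjL {Γ : Multiset Formula} {Δ : Option Formula} (φ ψ : Formula) :
      LJRule [(φ ::ₘ ψ ::ₘ Γ, Δ)] (Formula.conj φ ψ ::ₘ Γ, Δ)
  | conjR {Γ : Multiset Formula} (φ ψ : Formula) :
      LJRule [(Γ, some φ), (Γ, some ψ)] (Γ, some (Formula.conj φ ψ))
  | implL {Γ : Multiset Formula} {Δ : Option Formula} (φ ψ : Formula) :
      LJRule [(Γ, some φ), (ψ ::ₘ Γ, Δ)] (Formula.impl φ ψ ::ₘ Γ, Δ)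
  | implR {Γ : Multiset Formula} (φ ψ : Formula) :
      LJRule [(φ ::ₘ Γ, some ψ)] (Γ, some (Formula.impl φ ψ))
  | iw {Γ : Multiset Formula} {Δ : Option Formula} (φ : Formula) :
      LJRule [(Γ, Δ)] (φ ::ₘ Γ, Δ)
  | ic {Γ : Multiset Formula} {Δ : Option Formula} (φ : Formula) :
      LJRule [(φ ::ₘ φ ::ₘ Γ, Δ)] (φ ::ₘ Γ, Δ)
  | cut {Γ Γ' : Multiset Formula} {Δ : Option Formula} (φ : Formula) :
      LJRule [(Γ, some φ), (φ ::ₘ Γ', Δ)] (Γ + Γ', Δ)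

/-- Labels of rule applications in a 2-system derivation: an LJ rule, a top
rule application (tagged with the "level" of the bottom rule application it
belongs to, i.e. the number of bottom rules applied below the bottom rule of
its 2-system instance), or a bottom rule application of a 2-system. -/
inductive Lab : Type
  | lj : Lab
  | top : ℕ → Lab
  | bot : TwoSystem → Lab

/-- Derivation trees: a node carries a label, its conclusion sequent, and
the list of its immediate subderivations. -/
inductive DTree : Type
  | node : Lab → Sequent → List DTree → DTree

def DTree.lab : DTree → Lab
  | .node l _ _ => l

def DTree.concl : DTree → Sequent
  | .node _ s _ => s

def DTree.children : DTree → List DTree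
  | .node _ _ ts => ts

/-- `IsDeriv S ctx t` : `t` is a correct derivation in LJ extended with the
2-systems in `S`, where `ctx` lists the top rules enabled at the root
(`ctx.length` is the number of bottom rules applied below, and the top rule
at position `j` of `ctx` belongs to the 2-system instance whose bottom rule
was the (j+1)-st bottom rule encountered).  A genuine 2-system derivation of
a sequent is a tree `t` with `IsDeriv S [] t`, so that every top rule
application belongs to (occurs above a premiss of) the bottom rule of its
2-system instance. -/
inductive IsDeriv (S : Set TwoSystem) : List TopRule → DTree → Prop
  | lj {ctx : List TopRule} {s : Sequent} {ts : List DTree} :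
      LJRule (ts.map DTree.concl) s →
      (∀ u ∈ ts, IsDeriv S ctx u) →
      IsDeriv S ctx (DTree.node Lab.lj s ts)
  | top {ctx : List TopRule} (j : ℕ) (hj : j < ctx.length)
      (Γ' : Multiset Formula) (Δ' : Option Formula) {ts : List DTree} :
      ts.map DTree.concl = (ctx.get ⟨j, hj⟩).prems.map (fun p => (p + Γ', Δ')) →
      (∀ u ∈ ts, IsDeriv S ctx u) →
      IsDeriv S ctx (DTree.node (Lab.top j) ((ctx.get ⟨j, hj⟩).concl + Γ', Δ') ts)
  | bot {ctx : List TopRule} (sys : TwoSystem) (hs : sys ∈ S)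
      {s : Sequent} {ts : List DTree} :
      ts.length = sys.tops.length →
      (∀ u ∈ ts, u.concl = s) →
      (∀ p ∈ ts.zip sys.tops, IsDeriv S (ctx ++ [p.2]) p.1) →
      IsDeriv S ctx (DTree.node (Lab.bot sys) s ts)

/-- `Subtree u t` : `u` occurs as a subtree of `t`. -/
inductive Subtree : DTree → DTree → Prop
  | refl (t : DTree) : Subtree t t
  | child {u v : DTree} {l : Lab} {s : Sequent} {ts : List DTree} :
      u ∈ ts → Subtree v u → Subtree v (DTree.node l s ts)

/-! Replace every top rule application with premisses `Σᵢ, Γ' ⇒ Π'` by a cut on the formula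
`D = ⋁ᵢ ⋀Σᵢ`: the left premiss `Σ₀ ⇒ D` is a top rule application with empty context whose
premisses `Σᵢ ⇒ D` are pure LJ derivations, and the right premiss `D, Γ' ⇒ Π'` is derived
from the (recursively transformed) original premisses by `∨L` and `∧L`. Afterwards no top rule
application has another one above it. -/

inductive TopFree : DTree → Prop
  | node {l : Lab} {s : Sequent} {ts : List DTree} :
      (∀ j, l ≠ Lab.top j) → (∀ u ∈ ts, TopFree u) → TopFree (DTree.node l s ts)

inductive TopsIsolated : DTree → Prop
  | node {l : Lab} {s : Sequent} {ts : List DTree} :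
      (∀ j, l ≠ Lab.top j) → (∀ u ∈ ts, TopsIsolated u) → TopsIsolated (DTree.node l s ts)
  | top {j : ℕ} {s : Sequent} {ts : List DTree} :
      (∀ u ∈ ts, TopFree u) → TopsIsolated (DTree.node (Lab.top j) s ts)

theorem TopFree.lab_ne_top {t : DTree} (h : TopFree t) (j : ℕ) : t.lab ≠ Lab.top j := by
  cases h with
  | node hl _ => exact hl j

theorem TopFree.of_subtree {u t : DTree} (hu : Subtree u t) (h : TopFree t) : TopFree u := by
  induction hu with
  | refl => exact h
  | child hmem _ ih =>
    cases h with
    | node _ hts => exact ih (hts _ hmem)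

theorem TopsIsolated.topFree_of_subtree {t u : DTree} (h : TopsIsolated t) (hu : Subtree u t)
    {j : ℕ} (hlab : u.lab = Lab.top j) : ∀ c ∈ u.children, TopFree c := by
  induction hu with
  | refl =>
    cases h with
    | node hl _ => exact absurd hlab (hl j)
    | top hts => exact hts
  | child hmem hu ih =>
    cases h with
    | node _ hts => exact ih (hts _ hmem) hlab
    | top hts => exact absurd hlab ((hts _ hmem).of_subtree hu |>.lab_ne_top j)

def Proves (P : DTree → Prop) (s : Sequent) : Prop :=
  ∃ t, P t ∧ t.concl = s

def ClosedUnderLJ (P : DTree → Prop) : Prop :=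
  ∀ (s : Sequent) (ts : List DTree),
    LJRule (ts.map DTree.concl) s → (∀ u ∈ ts, P u) → P (DTree.node Lab.lj s ts)

theorem closedUnderLJ_isDeriv_topFree (S : Set TwoSystem) (ctx : List TopRule) :
    ClosedUnderLJ fun t => IsDeriv S ctx t ∧ TopFree t := fun _ _ hr hts =>
  ⟨.lj hr fun u hu => (hts u hu).1, .node (fun _ => Lab.noConfusion) fun u hu => (hts u hu).2⟩

theorem closedUnderLJ_isDeriv_topsIsolated (S : Set TwoSystem) (ctx : List TopRule) :
    ClosedUnderLJ fun t => IsDeriv S ctx t ∧ TopsIsolated t := fun _ _ hr hts =>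
  ⟨.lj hr fun u hu => (hts u hu).1, .node (fun _ => Lab.noConfusion) fun u hu => (hts u hu).2⟩

instance : Nonempty DTree := ⟨DTree.node Lab.lj (0, none) []⟩

theorem exists_map_concl_eq_of_forall_proves {P : DTree → Prop} {ss : List Sequent}
    (h : ∀ s ∈ ss, Proves P s) :
    ∃ ts : List DTree, ts.map DTree.concl = ss ∧ ∀ u ∈ ts, P u := by
  choose! f hPf hf using h
  refine ⟨ss.map f, ?_, ?_⟩
  · rw [List.map_map]
    exact (List.map_congr_left hf).trans ss.map_id
  · intro u hu
    obtain ⟨s, hs, rfl⟩ := List.mem_map.mp hu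
    exact hPf s hs

def bigConj : List Formula → Formula
  | [] => Formula.impl Formula.bot Formula.bot
  | φ :: l => Formula.conj φ (bigConj l)

def bigDisj : List Formula → Formula
  | [] => Formula.bot
  | φ :: l => Formula.disj φ (bigDisj l)

noncomputable def dnf (ps : List (Multiset Formula)) : Formula :=
  bigDisj (ps.map fun p => bigConj p.toList)

namespace ClosedUnderLJ

variable {P : DTree → Prop}

theorem proves_of_ljRule (hP : ClosedUnderLJ P) {ss : List Sequent} {s : Sequent}
    (hr : LJRule ss s) (h : ∀ s' ∈ ss, Proves P s') : Proves P s := by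
  obtain ⟨ts, rfl, hts⟩ := exists_map_concl_eq_of_forall_proves h
  exact ⟨_, hP s ts hr hts, rfl⟩

theorem proves_of_ljRule₀ (hP : ClosedUnderLJ P) {s : Sequent} (hr : LJRule [] s) :
    Proves P s :=
  hP.proves_of_ljRule hr (by simp)

theorem proves_of_ljRule₁ (hP : ClosedUnderLJ P) {s₁ s : Sequent} (hr : LJRule [s₁] s)
    (h₁ : Proves P s₁) : Proves P s :=
  hP.proves_of_ljRule hr (by simp [h₁])

theorem proves_of_ljRule₂ (hP : ClosedUnderLJ P) {s₁ s₂ s : Sequent} (hr : LJRule [s₁, s₂] s)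
    (h₁ : Proves P s₁) (h₂ : Proves P s₂) : Proves P s :=
  hP.proves_of_ljRule hr (by simp [h₁, h₂])


theorem proves_weaken (hP : ClosedUnderLJ P) {Γ : Multiset Formula} {Δ : Option Formula}
    (Θ : Multiset Formula) (h : Proves P (Γ, Δ)) : Proves P (Θ + Γ, Δ) := by
  induction Θ using Multiset.induction_on with
  | empty => simpa using h
  | cons φ Θ ih =>
    rw [Multiset.cons_add]
    exact hP.proves_of_ljRule₁ (.iw φ) ih

theorem proves_mem (hP : ClosedUnderLJ P) {φ : Formula} {Γ : Multiset Formula}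
    (hφ : φ ∈ Γ) : Proves P (Γ, some φ) := by
  obtain ⟨Θ, rfl⟩ := Multiset.exists_cons_of_mem hφ
  simpa [← Multiset.singleton_add, add_comm] using hP.proves_weaken Θ (hP.proves_of_ljRule₀ (.ax φ))

theorem proves_bigConj (hP : ClosedUnderLJ P) (L : List Formula) :
    Proves P (↑L, some (bigConj L)) := by
  induction L with
  | nil =>
    exact hP.proves_of_ljRule₁ (.implR (Γ := 0) _ _) (hP.proves_of_ljRule₀ (.ax _))
  | cons φ L ih =>
    have hφ : Proves P (φ ::ₘ ↑L, some φ) := hP.proves_mem (Multiset.mem_cons_self _ _)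
    have hL : Proves P (φ ::ₘ ↑L, some (bigConj L)) := by
      simpa [← Multiset.singleton_add] using hP.proves_weaken {φ} ih
    exact hP.proves_of_ljRule₂ (.conjR _ _) hφ hL

theorem proves_bigDisj (hP : ClosedUnderLJ P) {φ : Formula} {Γ : Multiset Formula}
    {Fs : List Formula} (hφ : φ ∈ Fs) (h : Proves P (Γ, some φ)) :
    Proves P (Γ, some (bigDisj Fs)) := by
  induction Fs with
  | nil => cases hφ
  | cons ψ Fs ih =>
    rcases List.mem_cons.mp hφ with rfl | hφ
    · exact hP.proves_of_ljRule₁ (.disjR1 _ _) h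
    · exact hP.proves_of_ljRule₁ (.disjR2 _ _) (ih hφ)

theorem proves_dnf (hP : ClosedUnderLJ P) {ps : List (Multiset Formula)}
    {p : Multiset Formula} (hp : p ∈ ps) : Proves P (p, some (dnf ps)) :=
  hP.proves_bigDisj (List.mem_map_of_mem hp) (by simpa using hP.proves_bigConj p.toList)

theorem proves_bigConj_left (hP : ClosedUnderLJ P) {Δ : Option Formula} (L : List Formula)
    (Γ : Multiset Formula) (h : Proves P (↑L + Γ, Δ)) : Proves P (bigConj L ::ₘ Γ, Δ) := by
  induction L generalizing Γ with
  | nil => exact hP.proves_of_ljRule₁ (.iw _) (by simpa using h)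
  | cons φ L ih =>
    have h' : Proves P (φ ::ₘ bigConj L ::ₘ Γ, Δ) := by
      rw [Multiset.cons_swap]
      exact ih _ (by rwa [Multiset.add_cons, ← Multiset.cons_add, Multiset.cons_coe])
    exact hP.proves_of_ljRule₁ (.conjL _ _) h'

theorem proves_dnf_left (hP : ClosedUnderLJ P) {Γ : Multiset Formula} {Δ : Option Formula}
    (ps : List (Multiset Formula)) (h : ∀ p ∈ ps, Proves P (p + Γ, Δ)) :
    Proves P (dnf ps ::ₘ Γ, Δ) := by
  induction ps with
  | nil =>
    show Proves P (Formula.bot ::ₘ Γ, Δ)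
    rw [← Multiset.singleton_add, add_comm]
    exact hP.proves_weaken Γ (hP.proves_of_ljRule₀ (.botL Δ))
  | cons p ps ih =>
    have hp : Proves P (bigConj p.toList ::ₘ Γ, Δ) :=
      hP.proves_bigConj_left _ _ (by simpa using h p (by simp))
    have hps : Proves P (dnf ps ::ₘ Γ, Δ) := ih fun q hq => h q (by simp [hq])
    exact hP.proves_of_ljRule₂ (.disjL _ _) hp hps

end ClosedUnderLJ

theorem proves_top_of_premisses {S : Set TwoSystem} {ctx : List TopRule} (j : ℕ)
    (hj : j < ctx.length) (Γ' : Multiset Formula) (Δ' : Option Formula)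
    (h : ∀ p ∈ (ctx.get ⟨j, hj⟩).prems,
      Proves (fun t => IsDeriv S ctx t ∧ TopsIsolated t) (p + Γ', Δ')) :
    Proves (fun t => IsDeriv S ctx t ∧ TopsIsolated t) ((ctx.get ⟨j, hj⟩).concl + Γ', Δ') := by
  set r := ctx.get ⟨j, hj⟩
  have hLJ := closedUnderLJ_isDeriv_topsIsolated S ctx
  have hRight : Proves _ (dnf r.prems ::ₘ Γ', Δ') := hLJ.proves_dnf_left r.prems h
  obtain ⟨ts, hts, hP⟩ := exists_map_concl_eq_of_forall_proves
    (P := fun t => IsDeriv S ctx t ∧ TopFree t)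
    (ss := r.prems.map fun p => (p + 0, some (dnf r.prems)))
    (by simpa using fun p hp => (closedUnderLJ_isDeriv_topFree S ctx).proves_dnf hp)
  have hLeft : Proves (fun t => IsDeriv S ctx t ∧ TopsIsolated t)
      (r.concl, some (dnf r.prems)) :=
    ⟨.node (.top j) (r.concl + 0, some (dnf r.prems)) ts,
      ⟨.top j hj 0 _ hts fun u hu => (hP u hu).1, .top fun u hu => (hP u hu).2⟩,
      by simp [DTree.concl]⟩
  exact hLJ.proves_of_ljRule₂ (.cut _) hLeft hRight

theorem IsDeriv.proves_topsIsolated {S : Set TwoSystem} {ctx : List TopRule} {t : DTree}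
    (h : IsDeriv S ctx t) : Proves (fun t' => IsDeriv S ctx t' ∧ TopsIsolated t') t.concl := by
  induction h with
  | @lj ctx s ts hr _ ih =>
    exact (closedUnderLJ_isDeriv_topsIsolated S ctx).proves_of_ljRule hr (by simpa using ih)
  | @top ctx j hj Γ' Δ' ts hmap _ ih =>
    refine proves_top_of_premisses j hj Γ' Δ' fun p hp => ?_
    obtain ⟨u, hu, hcu⟩ : ∃ u ∈ ts, u.concl = (p + Γ', Δ') := by
      rw [← List.mem_map, hmap]
      exact List.mem_map_of_mem hp
    exact hcu ▸ ih u hu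
  | @bot ctx sys hs s ts hlen hconcl _ ih =>
    choose! f hf hfc using ih
    set zs := ts.zip sys.tops
    have hsnd : zs.map Prod.snd = sys.tops := List.map_snd_zip hlen.ge
    refine ⟨.node (.bot sys) s (zs.map f),
      ⟨.bot sys hs ?_ ?_ ?_, .node (fun _ => Lab.noConfusion) ?_⟩, rfl⟩
    · simp [zs, hlen]
    · intro u hu
      obtain ⟨p, hp, rfl⟩ := List.mem_map.mp hu
      rw [hfc p hp]
      exact hconcl _ (List.of_mem_zip hp).1
    · rw [← hsnd, List.zip_map']
      intro q hq
      obtain ⟨p, hp, rfl⟩ := List.mem_map.mp hq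
      exact (hf p hp).1
    · intro u hu
      obtain ⟨p, hp, rfl⟩ := List.mem_map.mp hu
      exact (hf p hp).2

/-- Along a path of a derivation, two top rule applications carry the same level tag `j`
exactly when they belong to the same 2-system instance. -/
theorem no_two_top_rules_on_same_path (S : Set TwoSystem) (t : DTree)
    (h : IsDeriv S [] t) :
    ∃ t' : DTree, IsDeriv S [] t' ∧ t'.concl = t.concl ∧
      ¬ ∃ (u : DTree) (j : ℕ), Subtree u t' ∧ u.lab = Lab.top j ∧
        ∃ c ∈ u.children, ∃ v : DTree, Subtree v c ∧ v.lab = Lab.top j := by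
  obtain ⟨t', ⟨hderiv, hisolated⟩, hconcl⟩ := h.proves_topsIsolated
  refine ⟨t', hderiv, hconcl, ?_⟩
  rintro ⟨u, j, hu, hlab, c, hc, v, hv, hvlab⟩
  exact ((hisolated.topFree_of_subtree hu hlab c hc).of_subtree hv).lab_ne_top j hvlab
end

section
/- Let (r) be an application of a context-sharing hypersequent rule with premisses G | C₁, …, G | Cₙ and conclusion G | H. For natural numbers d ≥ 0 and c ≥ 0, let 𝕃_d be the set of hypersequents G | (H)^c | (C₁)^{x₁} | … | (Cₙ)^{xₙ} with x₁ + … + xₙ = d, where (K)^u denotes u copies of K. Then for every natural number e with 0 ≤ e ≤ d, each hypersequent in 𝕃_{d−e} = { G | (H)^{c+e} | (C₁)^{x'₁} | … | (Cₙ)^{x'ₙ} : x'₁ + … + x'ₙ = d − e } is derivable from hypersequents in 𝕃_d by repeatedly applying only the rule (r). -/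
/-- `RDer Cs Hc base K` : the hypersequent `K` is derivable from hypersequents
in `base` by repeatedly applying only the (context-sharing, schematic in its
hypersequent context) rule (r) which, for any hypersequent context G',
infers G' | Hc from the premisses G' | C₁, …, G' | Cₙ (`Cs = [C₁,…,Cₙ]`,
and `Hc` is the multiset of active components of the conclusion). -/
inductive RDer (Cs : List Sequent) (Hc : Hyper) (base : Set Hyper) : Hyper → Prop
  | ofBase {K : Hyper} : K ∈ base → RDer Cs Hc base K
  | rule (G' : Hyper) :
      (∀ C ∈ Cs, RDer Cs Hc base (C ::ₘ G')) →
      RDer Cs Hc base (G' + Hc)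

/-- The set 𝕃 of hypersequents G | (Hc)^c | (C₁)^{x₁} | … | (Cₙ)^{xₙ}
with x₁ + … + xₙ = d, where (K)^u denotes u copies of K. -/
def Lset (G : Hyper) (Hc : Hyper) (Cs : List Sequent) (c d : ℕ) : Set Hyper :=
  {K | ∃ xs : List ℕ, xs.length = Cs.length ∧ xs.sum = d ∧
    K = G + c • Hc + (List.zipWith (fun x C => x • ({C} : Multiset Sequent)) xs Cs).sum}

theorem List.exists_zipWith_nsmul_singleton_sum_eq_cons {α : Type*} {a : α} {as : List α}
    (ha : a ∈ as) {xs : List ℕ} (hlen : xs.length = as.length) :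
    ∃ ys : List ℕ, ys.length = as.length ∧ ys.sum = xs.sum + 1 ∧
      (List.zipWith (fun y b => y • ({b} : Multiset α)) ys as).sum =
        a ::ₘ (List.zipWith (fun x b => x • ({b} : Multiset α)) xs as).sum := by
  induction as generalizing xs with
  | nil => simp at ha
  | cons b bs ih =>
    obtain _ | ⟨x, xs⟩ := xs
    · simp at hlen
    simp only [List.length_cons, add_left_inj] at hlen
    obtain rfl | ha := List.mem_cons.1 ha
    · refine ⟨(x + 1) :: xs, by simp [hlen], by simp [add_right_comm], ?_⟩
      simp [succ_nsmul, ← Multiset.singleton_add, add_assoc, add_comm]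
    · obtain ⟨ys, hys_len, hys_sum, hys⟩ := ih ha hlen
      refine ⟨x :: ys, by simp [hys_len], by simp [hys_sum, add_assoc], ?_⟩
      simp [hys, ← Multiset.singleton_add, add_left_comm]

section Lset

variable {G Hc K : Hyper} {Cs : List Sequent} {c d : ℕ}

theorem cons_mem_Lset {C : Sequent} (hC : C ∈ Cs) (hK : K ∈ Lset G Hc Cs c d) :
    C ::ₘ K ∈ Lset G Hc Cs c (d + 1) := by
  obtain ⟨xs, hlen, rfl, rfl⟩ := hK
  obtain ⟨ys, hys_len, hys_sum, hys⟩ := List.exists_zipWith_nsmul_singleton_sum_eq_cons hC hlen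
  exact ⟨ys, hys_len, hys_sum, by rw [hys, Multiset.add_cons]⟩

theorem exists_add_of_mem_Lset_succ (hK : K ∈ Lset G Hc Cs (c + 1) d) :
    ∃ K' ∈ Lset G Hc Cs c d, K = K' + Hc := by
  obtain ⟨xs, hlen, hsum, rfl⟩ := hK
  refine ⟨_, ⟨xs, hlen, hsum, rfl⟩, ?_⟩
  rw [succ_nsmul]
  abel

/-- One application of (r) with context `K'` trades an occurrence of some `Cᵢ` for one of `Hc`. -/
theorem RDer.of_forall_Lset_succ {base : Set Hyper}
    (h : ∀ K ∈ Lset G Hc Cs c (d + 1), RDer Cs Hc base K) :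
    ∀ K ∈ Lset G Hc Cs (c + 1) d, RDer Cs Hc base K := by
  intro K hK
  obtain ⟨K', hK', rfl⟩ := exists_add_of_mem_Lset_succ hK
  exact RDer.rule K' fun C hC => h _ (cons_mem_Lset hC hK')

end Lset

/-- Lemma: for any application of the rule (r) (with premisses G | C₁, …,
G | Cₙ and conclusion G | H) and any natural numbers d and c, for every
e ≤ d, each element of 𝕃_{d−e} (where H occurs c+e times) is derivable from
hypersequents in 𝕃_d (where H occurs c times) by repeatedly applying only
the rule (r). -/
theorem downwards_lemma (Cs : List Sequent) (Hc G : Hyper) (c d e : ℕ)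
    (he : e ≤ d) :
    ∀ K ∈ Lset G Hc Cs (c + e) (d - e), RDer Cs Hc (Lset G Hc Cs c d) K := by
  induction e with
  | zero => exact fun K hK => RDer.ofBase hK
  | succ e ih =>
    have hd : d - e = d - (e + 1) + 1 := by omega
    rw [← add_assoc]
    exact RDer.of_forall_Lset_succ (hd ▸ ih (by omega))
end

section
/- Let (r) be an application of a context-sharing hypersequent rule with premisses G | C₁, …, G | Cₙ and conclusion G | H, and suppose for each i = 1,…,n the hypersequent G | G'ᵢ | (Cᵢ)^{mᵢ} is given, where every component of G'ᵢ also occurs in G. Then the hypersequent G | G'' | (H)^q, where G'' = G'₁ | … | G'ₙ and q = (Σᵢ₌₁ⁿ (mᵢ − 1)) + 1, is derivable from G | G'₁ | (C₁)^{m₁}, …, G | G'ₙ | (Cₙ)^{mₙ} using only external weakening (EW) and the rule (r). -/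
/-- `EWRDer Cs Hc base K` : the hypersequent `K` is derivable from
hypersequents in `base` using only external weakening (EW) and the
(context-sharing, schematic in its hypersequent context) rule (r) which, for
any hypersequent context G', infers G' | Hc from G' | C₁, …, G' | Cₙ. -/
inductive EWRDer (Cs : List Sequent) (Hc : Hyper) (base : Set Hyper) : Hyper → Prop
  | ofBase {K : Hyper} : K ∈ base → EWRDer Cs Hc base K
  | ew {K : Hyper} (s : Sequent) : EWRDer Cs Hc base K → EWRDer Cs Hc base (s ::ₘ K)
  | rule (G' : Hyper) :
      (∀ C ∈ Cs, EWRDer Cs Hc base (C ::ₘ G')) →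
      EWRDer Cs Hc base (G' + Hc)

/-!
Apply (r) over and over, each time with the context `G | G''`, the copies of the `Cᵢ` collected so
far, and the copies of `H` still to be produced. In the premiss for `Cᵢ`, either `Cᵢ` now occurs
`mᵢ` times, and the premiss is a weakening of `G | G'ᵢ | (Cᵢ)^{mᵢ}`, or one more `Cᵢ` is collected,
which uses up one copy of `H`. At most `Σᵢ (mᵢ - 1)` copies can be collected before every branch
ends in a weakening, so `q` copies of `H` are enough.
-/

theorem Multiset.card_lt_sum_of_count_lt {ι : Type*} [Fintype ι] [DecidableEq ι]
    {S : Multiset ι} {b : ι → ℕ} {i : ι} (hle : ∀ j, S.count j ≤ b j) (hlt : S.count i < b i) :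
    card S < ∑ j, b j := by
  rw [← Multiset.sum_count_eq_card (s := Finset.univ) fun a _ => Finset.mem_univ a]
  exact Finset.sum_lt_sum (fun j _ => hle j) ⟨i, Finset.mem_univ i, hlt⟩

theorem Multiset.count_nsmul_singleton_le_map {α β : Type*} [DecidableEq α] (f : α → β)
    (S : Multiset α) (a : α) : S.count a • {f a} ≤ S.map f := by
  rw [Multiset.nsmul_singleton, ← Multiset.map_replicate]
  exact Multiset.map_le_map (Multiset.le_count_iff_replicate_le.mp le_rfl)

theorem Fin.sum_univ_fun_getD {α M : Type*} [AddCommMonoid M] {l : List α} {n : ℕ}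
    (h : l.length = n) (d : α) (f : α → M) :
    ∑ i : Fin n, f (l.getD i d) = (l.map f).sum := by
  subst h
  simp

theorem List.getD_mem {α : Type*} {l : List α} {i : ℕ} (hi : i < l.length) (d : α) :
    l.getD i d ∈ l := by
  rw [List.getD_eq_getElem l d hi]
  exact List.getElem_mem hi

namespace EWRDer

variable {Cs : List Sequent} {Hc : Hyper} {base : Set Hyper}

theorem mono {K K' : Hyper} (h : EWRDer Cs Hc base K) (hle : K ≤ K') :
    EWRDer Cs Hc base K' := by
  obtain ⟨D, rfl⟩ := Multiset.le_iff_exists_add.mp hle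
  clear hle
  induction D using Multiset.induction with
  | empty => simpa using h
  | cons s D ih => simpa [Multiset.add_cons] using ih.ew s

/- `S` records indices rather than sequents because the `Cᵢ` need not be distinct. -/
theorem of_count_lt (D : Hyper) (m : Fin Cs.length → ℕ)
    (hbase : ∀ i, EWRDer Cs Hc base (D + m i • {Cs.get i}))
    (S : Multiset (Fin Cs.length)) (hS : ∀ i, S.count i < m i) :
    EWRDer Cs Hc base (D + S.map Cs.get + (∑ i, (m i - 1) - Multiset.card S + 1) • Hc) := by
  induction hL : ∑ i, (m i - 1) - Multiset.card S using Nat.strong_induction_on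
    generalizing S with
  | _ L ih =>
  rw [succ_nsmul, ← add_assoc]
  refine rule _ fun C hC => ?_
  obtain ⟨i, rfl⟩ := List.mem_iff_get.mp hC
  by_cases hfull : m i ≤ S.count i + 1
  · refine (hbase i).mono ?_
    calc D + m i • {Cs.get i}
        ≤ D + (S.count i • {Cs.get i} + {Cs.get i}) := by
          rw [← succ_nsmul]; gcongr
      _ ≤ D + (S.map Cs.get + {Cs.get i}) := by
          gcongr; exact Multiset.count_nsmul_singleton_le_map _ _ _
      _ ≤ Cs.get i ::ₘ (D + S.map Cs.get + L • Hc) := by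
          rw [← Multiset.singleton_add, add_comm {_}, ← add_assoc]
          exact add_le_add (Multiset.le_add_right _ _) le_rfl
  · push Not at hfull
    have hS' : ∀ j, (i ::ₘ S).count j < m j := by
      intro j
      rw [Multiset.count_cons]
      split_ifs with hj
      · exact hj ▸ hfull
      · simpa using hS j
    have hcard : Multiset.card S < ∑ j, (m j - 1) :=
      Multiset.card_lt_sum_of_count_lt (fun j => Nat.le_sub_one_of_lt (hS j))
        (by omega : S.count i < m i - 1)
    obtain ⟨L', rfl⟩ : ∃ L', L = L' + 1 := ⟨L - 1, by omega⟩
    refine (ih L' (by omega) (i ::ₘ S) hS' (by simp; omega)).mono (le_of_eq ?_)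
    rw [Multiset.map_cons, ← Multiset.singleton_add, ← Multiset.singleton_add]
    abel

end EWRDer

theorem star_claim_general (Cs : List Sequent) (Hc G : Hyper)
    (Gs : List Hyper) (ms : List ℕ)
    (hGs : Gs.length = Cs.length) (hms : ms.length = Cs.length)
    (hm1 : ∀ m ∈ ms, 1 ≤ m) :
    EWRDer Cs Hc
      {K | ∃ i : Fin Cs.length,
        K = G + Gs.getD i 0 + (ms.getD i 0) • ({Cs.get i} : Multiset Sequent)}
      (G + Gs.sum + ((ms.map (fun m => m - 1)).sum + 1) • Hc) := by
  have hpos (i : Fin Cs.length) : 0 < ms.getD i 0 := hm1 _ (List.getD_mem (by omega) 0)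
  have hsum : ∑ i : Fin Cs.length, (ms.getD i 0 - 1) = (ms.map (fun m => m - 1)).sum :=
    Fin.sum_univ_fun_getD hms 0 (fun m => m - 1)
  rw [← hsum]
  refine EWRDer.mono (EWRDer.of_count_lt (G + Gs.sum) (fun i => ms.getD i 0)
    (fun i => ?_) 0 (by simpa using hpos)) (by simp)
  refine EWRDer.mono (EWRDer.ofBase ⟨i, rfl⟩) ?_
  gcongr
  exact List.le_sum_of_mem (List.getD_mem (by omega) 0)

/-- Claim (⋆) of the EC-elimination lemma: given an application of the rule
(r) with premisses G | C₁, …, G | Cₙ and conclusion G | H, and hypersequents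
G | G'ᵢ | (Cᵢ)^{mᵢ} (i = 1,…,n) where every component of each G'ᵢ also
occurs in G and each mᵢ ≥ 1, the hypersequent G | G'' | (H)^q, with
G'' = G'₁ | … | G'ₙ and q = (Σᵢ (mᵢ − 1)) + 1, is derivable from the
hypersequents G | G'ᵢ | (Cᵢ)^{mᵢ} using only (EW) and (r). -/
theorem star_claim (Cs : List Sequent) (Hc G : Hyper)
    (Gs : List Hyper) (ms : List ℕ)
    (hGs : Gs.length = Cs.length) (hms : ms.length = Cs.length)
    (hm1 : ∀ m ∈ ms, 1 ≤ m)
    (hsub : ∀ G' ∈ Gs, ∀ s ∈ G', s ∈ G) :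
    EWRDer Cs Hc
      {K | ∃ i : Fin Cs.length,
        K = G + Gs.getD i 0 + (ms.getD i 0) • ({Cs.get i} : Multiset Sequent)}
      (G + Gs.sum + ((ms.map (fun m => m - 1)).sum + 1) • Hc) :=
  star_claim_general Cs Hc G Gs ms hGs hms hm1
end
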